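/- arXiv:solv-int/9704004 — 7 statements merged into one kernel-verified Lean document; each statement's English description precedes it below -/
import Mathlib

section
/- Let r ≥ 1, N ≥ 2, and let U ⊆ ℂ^N be a connected open set all of whose points have pairwise distinct coordinates. Let A_1,…,A_N : U → M_r(ℂ) be holomorphic. Then the following are equivalent: (i) for every j ∈ {1,…,N}, every t ∈ U and every λ ∈ ℂ \ {t_1,…,t_N}, the zero-curvature equation ∂M(λ,t)/∂t_j + [A_j(t)/(λ − t_j), M(λ,t)] − A_j(t)/(λ − t_j)² = 0 holds (where the partial derivative is taken with λ held fixed); (ii) the functions A_1,…,A_N satisfy the Schlesinger equation on U. -/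
/-! Write `S_kj` for the right-hand side of the Schlesinger equation for `∂A_k/∂t_j`.
By the partial-fraction identity
`1/((λ-t_j)(λ-t_k)) = (1/(λ-t_j) - 1/(λ-t_k))/(t_j-t_k)`, the bracket in the zero-curvature
equation equals `-Σ_k S_kj/(λ-t_k)`, while `∂M/∂t_j` contributes `Σ_k (∂A_k/∂t_j)/(λ-t_k)` and
a term `A_j/(λ-t_j)²` that cancels. So the zero-curvature expression is
`Σ_k (∂A_k/∂t_j - S_kj)/(λ-t_k)`, and a sum of simple fractions with distinct poles vanishes for
all admissible `λ` only if every residue vanishes: multiply by `λ - t_k` and let `λ → t_k`. -/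

open Matrix Finset

attribute [local instance] Matrix.normedAddCommGroup Matrix.normedSpace

open Filter Topology

section LieAlgebra

variable {K : Type*} [Field K]

lemma inv_sub_mul_inv_sub {a b z : K} (hab : a ≠ b) (ha : z ≠ a) (hb : z ≠ b) :
    (z - a)⁻¹ * (z - b)⁻¹ = (a - b)⁻¹ * ((z - a)⁻¹ - (z - b)⁻¹) := by
  have : a - b ≠ 0 := sub_ne_zero.mpr hab
  have : z - a ≠ 0 := sub_ne_zero.mpr ha
  have : z - b ≠ 0 := sub_ne_zero.mpr hb
  field_simp
  ring

variable {L ι : Type*} [LieRing L] [LieAlgebra K L] [Fintype ι] [DecidableEq ι]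

-- `schlesingerTerm t X k j` is `S_kj`, the Schlesinger right-hand side for `∂X_k/∂t_j`.
def schlesingerTerm (t : ι → K) (X : ι → L) (k j : ι) : L :=
  if k = j then -∑ m ∈ univ.erase j, (t j - t m)⁻¹ • ⁅X j, X m⁆
  else (t k - t j)⁻¹ • ⁅X k, X j⁆

lemma schlesingerTerm_of_ne (t : ι → K) (X : ι → L) {k j : ι} (h : k ≠ j) :
    schlesingerTerm t X k j = (t j - t k)⁻¹ • ⁅X j, X k⁆ := by
  rw [schlesingerTerm, if_neg h, ← lie_skew, smul_neg, ← neg_smul, ← inv_neg, neg_sub]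

lemma schlesingerTerm_self (t : ι → K) (X : ι → L) (j : ι) :
    schlesingerTerm t X j j = -∑ k ∈ univ.erase j, schlesingerTerm t X k j := by
  rw [schlesingerTerm, if_pos rfl]
  congr 1
  exact sum_congr rfl fun k hk => (schlesingerTerm_of_ne t X (ne_of_mem_erase hk)).symm

lemma lie_inv_sub_smul_sum {t : ι → K} (ht : Function.Injective t) {z : K} (hz : ∀ i, z ≠ t i)
    (X : ι → L) (j : ι) :
    ⁅(z - t j)⁻¹ • X j, ∑ i, (z - t i)⁻¹ • X i⁆
      = -∑ k, (z - t k)⁻¹ • schlesingerTerm t X k j := by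
  rw [← add_sum_erase _ _ (mem_univ j), ← add_sum_erase _ _ (mem_univ j), schlesingerTerm_self,
    lie_add, lie_sum, lie_smul, smul_lie, lie_self, smul_zero, smul_zero,
    zero_add, smul_neg, smul_sum, neg_add, neg_neg, ← sum_neg_distrib, ← sum_add_distrib]
  refine sum_congr rfl fun k hk => ?_
  have hkj := ne_of_mem_erase hk
  rw [schlesingerTerm_of_ne t X hkj, smul_lie, lie_smul, smul_smul, smul_smul, smul_smul,
    ← neg_smul, ← add_smul, inv_sub_mul_inv_sub (ht.ne hkj.symm) (hz j) (hz k)]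
  congr 1
  ring

end LieAlgebra

section Derivative

variable {𝕜 E ι : Type*} [NontriviallyNormedField 𝕜] [NormedAddCommGroup E] [NormedSpace 𝕜 E]
  [Fintype ι] {F : (ι → 𝕜) → E} {t : ι → 𝕜} {z : 𝕜} {i : ι}

lemma differentiableAt_inv_sub_smul (hF : DifferentiableAt 𝕜 F t) (hz : z ≠ t i) :
    DifferentiableAt 𝕜 (fun s => (z - s i)⁻¹ • F s) t :=
  (((differentiableAt_apply (𝕜 := 𝕜) i t).const_sub z).inv (sub_ne_zero.mpr hz)).smul hF

lemma fderiv_inv_sub_smul_apply (hF : DifferentiableAt 𝕜 F t) (hz : z ≠ t i) (v : ι → 𝕜) :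
    fderiv 𝕜 (fun s => (z - s i)⁻¹ • F s) t v
      = (z - t i)⁻¹ • fderiv 𝕜 F t v + (v i * ((z - t i) ^ 2)⁻¹) • F t := by
  have hden : HasFDerivAt (fun s : ι → 𝕜 => (z - s i)⁻¹) _ t :=
    (hasFDerivAt_inv (sub_ne_zero.mpr hz)).comp t ((hasFDerivAt_apply (𝕜 := 𝕜) i t).const_sub z)
  rw [fderiv_fun_smul hden.differentiableAt hF, hden.fderiv]
  simp

variable [DecidableEq ι] {F : ι → (ι → 𝕜) → E}

lemma fderiv_sum_inv_sub_smul_single (hF : ∀ i, DifferentiableAt 𝕜 (F i) t)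
    (hz : ∀ i, z ≠ t i) (j : ι) :
    fderiv 𝕜 (fun s => ∑ i, (z - s i)⁻¹ • F i s) t (Pi.single j 1)
      = ∑ i, (z - t i)⁻¹ • fderiv 𝕜 (F i) t (Pi.single j 1) + ((z - t j) ^ 2)⁻¹ • F j t := by
  rw [fderiv_fun_sum fun i _ => differentiableAt_inv_sub_smul (hF i) (hz i), _root_.sum_apply]
  simp only [fderiv_inv_sub_smul_apply (hF _) (hz _), sum_add_distrib, Pi.single_apply,
    ite_mul, one_mul, zero_mul, ite_smul, zero_smul, sum_ite_eq', mem_univ, if_true]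

end Derivative

section PartialFractionExpansion

variable {𝕜 M ι : Type*} [NontriviallyNormedField 𝕜] [NormedAddCommGroup M] [NormedSpace 𝕜 M]
  [Fintype ι]

lemma eventually_nhdsNE_forall_ne {t : ι → 𝕜} (ht : Function.Injective t) (k : ι) :
    ∀ᶠ z in 𝓝[≠] t k, ∀ i, z ≠ t i := by
  refine eventually_all.2 fun i => ?_
  rcases eq_or_ne i k with rfl | hik
  · exact self_mem_nhdsWithin
  · exact nhdsWithin_le_nhds (eventually_ne_nhds (ht.ne hik).symm)

lemma eq_zero_of_sum_inv_sub_smul_eq_zero {t : ι → 𝕜} (ht : Function.Injective t) {E : ι → M}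
    (h : ∀ z, (∀ i, z ≠ t i) → ∑ i, (z - t i)⁻¹ • E i = 0) (k : ι) : E k = 0 := by
  classical
  set φ : 𝕜 → M := fun z => E k + ∑ i ∈ univ.erase k, ((z - t k) * (z - t i)⁻¹) • E i
  have hφ_cont : ContinuousAt φ (t k) := by
    refine continuousAt_const.add (tendsto_finsetSum _ fun i hi => ?_)
    have hki : t k - t i ≠ 0 := sub_ne_zero.mpr (ht.ne (ne_of_mem_erase hi).symm)
    exact (((continuousAt_id.sub continuousAt_const)).mul
      ((continuousAt_id.sub continuousAt_const).inv₀ hki)).smul continuousAt_const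
  have hφ_zero : ∀ᶠ z in 𝓝[≠] t k, φ z = 0 := by
    filter_upwards [eventually_nhdsNE_forall_ne ht k] with z hz
    calc φ z = (z - t k) • ∑ i, (z - t i)⁻¹ • E i := by
          rw [smul_sum, ← add_sum_erase _ _ (mem_univ k), smul_smul,
            mul_inv_cancel₀ (sub_ne_zero.mpr (hz k)), one_smul]
          simp only [φ, smul_smul]
      _ = 0 := by rw [h z hz, smul_zero]
  have hφ_tk : φ (t k) = E k := by simp [φ]
  exact tendsto_nhds_unique (hφ_tk ▸ hφ_cont.tendsto.mono_left nhdsWithin_le_nhds)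
    (tendsto_const_nhds.congr' (hφ_zero.mono fun z hz => hz.symm))

end PartialFractionExpansion

section MatrixZeroCurvature

-- Mathlib does not make the commutator Lie ring structure on an associative ring global.
attribute [local instance 100] LieRing.ofAssociativeRing

lemma zeroCurvature_eq_sum_inv_sub_smul {𝕜 n ι : Type*} [NontriviallyNormedField 𝕜]
    [Fintype n] [DecidableEq n] [Fintype ι] [DecidableEq ι]
    {A : ι → (ι → 𝕜) → Matrix n n 𝕜} {t : ι → 𝕜} (ht : Function.Injective t)
    (hA : ∀ i, DifferentiableAt 𝕜 (A i) t) {z : 𝕜} (hz : ∀ i, z ≠ t i) (j : ι) :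
    fderiv 𝕜 (fun s => ∑ i, (z - s i)⁻¹ • A i s) t (Pi.single j 1)
        + ⁅(z - t j)⁻¹ • A j t, ∑ i, (z - t i)⁻¹ • A i t⁆ - ((z - t j) ^ 2)⁻¹ • A j t
      = ∑ k, (z - t k)⁻¹ •
          (fderiv 𝕜 (A k) t (Pi.single j 1) - schlesingerTerm t (fun i => A i t) k j) := by
  -- `rw` with `fderiv_sum_inv_sub_smul_single` fails: its sum is over the normed-group instance
  -- on matrices, not `Matrix.addCommMonoid`; `exact` unifies the two by unfolding.
  calc _ = (∑ i, (z - t i)⁻¹ • fderiv 𝕜 (A i) t (Pi.single j 1) + ((z - t j) ^ 2)⁻¹ • A j t)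
          + -∑ k, (z - t k)⁻¹ • schlesingerTerm t (fun i => A i t) k j
          - ((z - t j) ^ 2)⁻¹ • A j t := by
        rw [← lie_inv_sub_smul_sum ht hz]
        congr 2
        exact fderiv_sum_inv_sub_smul_single hA hz j
    _ = _ := by
        simp only [smul_sub, sum_sub_distrib]
        abel

end MatrixZeroCurvature

theorem schlesinger_iff_zero_curvature_general
    (r N : ℕ)
    (U : Set (Fin N → ℂ)) (hUo : IsOpen U)
    (hUd : ∀ t ∈ U, ∀ i j : Fin N, i ≠ j → t i ≠ t j)
    (A : Fin N → (Fin N → ℂ) → Matrix (Fin r) (Fin r) ℂ)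
    (hA : ∀ i, DifferentiableOn ℂ (A i) U) :
    (∀ j : Fin N, ∀ t ∈ U, ∀ z : ℂ, (∀ i : Fin N, z ≠ t i) →
        fderiv ℂ (fun s => ∑ i, (z - s i)⁻¹ • A i s) t (Pi.single j 1)
          + ⁅(z - t j)⁻¹ • A j t, ∑ i, (z - t i)⁻¹ • A i t⁆
          - ((z - t j) ^ 2)⁻¹ • A j t = 0)
    ↔
    (∀ i j : Fin N, ∀ t ∈ U,
        (i ≠ j → fderiv ℂ (A i) t (Pi.single j 1)
            = (t i - t j)⁻¹ • ⁅A i t, A j t⁆) ∧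
        fderiv ℂ (A i) t (Pi.single i 1)
            = -∑ k ∈ Finset.univ.erase i, (t i - t k)⁻¹ • ⁅A i t, A k t⁆) := by
  have hinj : ∀ t ∈ U, Function.Injective t := fun t ht a b => not_imp_not.mp (hUd t ht a b)
  have hdiff : ∀ t ∈ U, ∀ i, DifferentiableAt ℂ (A i) t := fun t ht i =>
    (hA i t ht).differentiableAt (hUo.mem_nhds ht)
  let _ : LieRing (Matrix (Fin r) (Fin r) ℂ) := LieRing.ofAssociativeRing
  have hschlesinger : (∀ i j : Fin N, ∀ t ∈ U,
      (i ≠ j → fderiv ℂ (A i) t (Pi.single j 1) = (t i - t j)⁻¹ • ⁅A i t, A j t⁆) ∧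
      fderiv ℂ (A i) t (Pi.single i 1)
        = -∑ k ∈ Finset.univ.erase i, (t i - t k)⁻¹ • ⁅A i t, A k t⁆) ↔
      ∀ i j, ∀ t ∈ U, fderiv ℂ (A i) t (Pi.single j 1) = schlesingerTerm t (fun k => A k t) i j := by
    refine ⟨fun h i j t ht => ?_, fun h i j t ht => ⟨fun hij => ?_, ?_⟩⟩
    · rcases eq_or_ne i j with rfl | hij
      · simpa [schlesingerTerm] using (h i i t ht).2
      · simpa [schlesingerTerm, hij] using (h i j t ht).1 hij
    · simpa [schlesingerTerm, hij] using h i j t ht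
    · simpa [schlesingerTerm] using h i i t ht
  rw [hschlesinger]
  constructor
  · intro h i j t ht
    have hcoeff : ∀ z, (∀ k, z ≠ t k) → ∑ k, (z - t k)⁻¹ •
        (fderiv ℂ (A k) t (Pi.single j 1) - schlesingerTerm t (fun m => A m t) k j) = 0 :=
      fun z hz => by
        rw [← zeroCurvature_eq_sum_inv_sub_smul (hinj t ht) (hdiff t ht) hz]
        exact h j t ht z hz
    exact sub_eq_zero.mp (eq_zero_of_sum_inv_sub_smul_eq_zero (hinj t ht) hcoeff i)
  · intro h j t ht z hz
    rw [zeroCurvature_eq_sum_inv_sub_smul (hinj t ht) (hdiff t ht) hz]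
    simp [h _ j t ht]

/-- **Zero-curvature formulation of the Schlesinger equation.**
For holomorphic `A₁,…,A_N : U → Mₙ(ℂ)` on a connected open set `U ⊆ ℂ^N` whose points have
pairwise distinct coordinates, the zero-curvature equation
`∂M(λ,t)/∂t_j + [A_j/(λ−t_j), M(λ,t)] − A_j/(λ−t_j)² = 0` (for all `j`, `t ∈ U`,
`λ ∉ {t_1,…,t_N}`, with `M(λ,t) = Σ_i A_i(t)/(λ−t_i)`) holds iff the `A_i` satisfy the
Schlesinger equation on `U`. -/
theorem schlesinger_iff_zero_curvature
    (r N : ℕ) (hr : 1 ≤ r) (hN : 2 ≤ N)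
    (U : Set (Fin N → ℂ)) (hUo : IsOpen U) (hUc : IsConnected U)
    (hUd : ∀ t ∈ U, ∀ i j : Fin N, i ≠ j → t i ≠ t j)
    (A : Fin N → (Fin N → ℂ) → Matrix (Fin r) (Fin r) ℂ)
    (hA : ∀ i, DifferentiableOn ℂ (A i) U) :
    (∀ j : Fin N, ∀ t ∈ U, ∀ z : ℂ, (∀ i : Fin N, z ≠ t i) →
        fderiv ℂ (fun s => ∑ i, (z - s i)⁻¹ • A i s) t (Pi.single j 1)
          + ⁅(z - t j)⁻¹ • A j t, ∑ i, (z - t i)⁻¹ • A i t⁆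
          - ((z - t j) ^ 2)⁻¹ • A j t = 0)
    ↔
    (∀ i j : Fin N, ∀ t ∈ U,
        (i ≠ j → fderiv ℂ (A i) t (Pi.single j 1)
            = (t i - t j)⁻¹ • ⁅A i t, A j t⁆) ∧
        fderiv ℂ (A i) t (Pi.single i 1)
            = -∑ k ∈ Finset.univ.erase i, (t i - t k)⁻¹ • ⁅A i t, A k t⁆) :=
  schlesinger_iff_zero_curvature_general r N U hUo hUd A hA
end

section
/- Let r ≥ 1, N ≥ 2, let c_1,…,c_N be pairwise distinct complex constants, and let A_1,…,A_N : U → M_r(ℂ) be holomorphic on a connected open set U ⊆ ℂ^N satisfying Garnier's autonomous system. Then Garnier's system is isospectral: for every λ ∈ ℂ \ {c_1,…,c_N} and every μ ∈ ℂ, the function t ↦ det(M(λ,t) − μ I) is constant on U. -/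
/-!
Along a solution, `M(λ,t) = Σ_k A_k(t)/(λ - c_k)` obeys the Lax equation
`∂M/∂t_j = [M, A_j]/(λ - c_j)`; the partial-fraction identity
`1/((λ-c_k)(c_k-c_j)) + 1/((λ-c_j)(c_j-c_k)) = 1/((λ-c_j)(λ-c_k))` is what turns the right-hand
sides of Garnier's system into this commutator. Shifting by `μ I` does not change commutators,
and Jacobi's formula `d det X = tr(adj X · dX)` together with `tr(adj X · [X, B]) = 0`
shows that `det(M - μ I)` has vanishing derivative, hence is constant on the connected set `U`.
-/

open Matrix Finset

attribute [local instance] Matrix.normedAddCommGroup Matrix.normedSpace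

namespace Matrix

variable {n 𝕜 : Type*} [Fintype n] [DecidableEq n]

theorem sum_det_updateRow {R : Type*} [CommRing R] (X H : Matrix n n R) :
    ∑ i, (X.updateRow i (H i)).det = trace (X.adjugate * H) := by
  have hrow (i : n) : (X.updateRow i (H i)).det = (H * X.adjugate) i i := by
    rw [← det_transpose, ← updateCol_transpose, ← cramer_apply, cramer_eq_adjugate_mulVec,
      ← adjugate_transpose, mulVec, dotProduct, mul_apply]
    exact sum_congr rfl fun j _ => mul_comm _ _
  exact (sum_congr rfl fun i _ => hrow i).trans (trace_mul_comm H X.adjugate)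

theorem trace_adjugate_mul_lie {R : Type*} [CommRing R] (X B : Matrix n n R) :
    trace (X.adjugate * ⁅X, B⁆) = 0 := by
  rw [Ring.lie_def, Matrix.mul_sub, trace_sub, ← Matrix.mul_assoc, adjugate_mul,
    ← Matrix.mul_assoc, trace_mul_comm (X.adjugate * B), ← Matrix.mul_assoc, mul_adjugate,
    sub_self]

variable [NontriviallyNormedField 𝕜]

variable (n 𝕜) in
noncomputable def detRowContinuousAlternating : (n → 𝕜) [⋀^n]→L[𝕜] 𝕜 :=
  { detRowAlternating with cont := continuous_id.matrix_det }

theorem detRowContinuousAlternating_linearDeriv (X H : Matrix n n 𝕜) :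
    (detRowContinuousAlternating n 𝕜).1.linearDeriv X H = trace (X.adjugate * H) :=
  (ContinuousMultilinearMap.linearDeriv_apply _ _ _).trans (sum_det_updateRow X H)

variable {E : Type*} [NormedAddCommGroup E] [NormedSpace 𝕜 E]

theorem _root_.HasFDerivAt.matrix_det {X : E → Matrix n n 𝕜} {X' : E →L[𝕜] Matrix n n 𝕜}
    {t : E} (h : HasFDerivAt X X' t) :
    HasFDerivAt (fun x ↦ (X x).det)
      ((detRowContinuousAlternating n 𝕜).1.linearDeriv (X t) ∘L X') t :=
  ((detRowContinuousAlternating n 𝕜).hasFDerivAt (X t)).comp t h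

theorem det_eq_of_hasFDerivAt_eq_lie [IsRCLikeNormedField 𝕜] [NormedSpace ℝ E] {U : Set E}
    (hUo : IsOpen U) (hUc : IsPreconnected U) {X : E → Matrix n n 𝕜} {X' : E → E →L[𝕜] Matrix n n 𝕜}
    (hX : ∀ t ∈ U, HasFDerivAt X (X' t) t) (hlax : ∀ t ∈ U, ∀ v, ∃ B, X' t v = ⁅X t, B⁆)
    {t t' : E} (ht : t ∈ U) (ht' : t' ∈ U) : (X t).det = (X t').det := by
  have hdet (s : E) (hs : s ∈ U) : HasFDerivAt (fun x ↦ (X x).det) (0 : E →L[𝕜] 𝕜) s := by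
    convert (hX s hs).matrix_det
    ext v
    obtain ⟨B, hB⟩ := hlax s hs v
    exact ((detRowContinuousAlternating_linearDeriv (X s) (X' s v)).trans
      (hB ▸ trace_adjugate_mul_lie (X s) B)).symm
  exact hUo.is_const_of_fderiv_eq_zero hUc
    (fun s hs ↦ (hdet s hs).differentiableAt.differentiableWithinAt)
    (fun s hs ↦ (hdet s hs).fderiv) ht ht'

end Matrix

theorem LinearMap.apply_eq_lie_sum_smul {K L ι : Type*} [CommRing K] [LieRing L]
    [LieAlgebra K L] [Fintype ι] [DecidableEq ι] (D : (ι → K) →ₗ[K] L) (X : L) (B : ι → L)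
    (hD : ∀ j, D (Pi.single j 1) = ⁅X, B j⁆) (v : ι → K) : D v = ⁅X, ∑ j, v j • B j⁆ := by
  rw [D.pi_apply_eq_sum_univ, lie_sum]
  refine sum_congr rfl fun j _ ↦ ?_
  rw [lie_smul, ← hD]
  congr
  ext i
  simp [Pi.single_apply, eq_comm]

theorem garnier_sum_smul_eq_lie {K L ι : Type*} [Field K] [LieRing L] [LieAlgebra K L]
    [Fintype ι] [DecidableEq ι] {c : ι → K} (hc : Function.Injective c) {A : ι → L}
    {A' : ι → ι → L} (hoff : ∀ i j, i ≠ j → A' i j = (c i - c j)⁻¹ • ⁅A i, A j⁆)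
    (hdiag : ∀ i, A' i i = -∑ k ∈ univ.erase i, (c i - c k)⁻¹ • ⁅A i, A k⁆)
    {z : K} (hz : ∀ k, z ≠ c k) (j : ι) :
    ∑ k, (z - c k)⁻¹ • A' k j = (z - c j)⁻¹ • ⁅∑ k, (z - c k)⁻¹ • A k, A j⁆ := by
  rw [← sum_erase_add _ _ (mem_univ j), hdiag, sum_lie, ← sum_erase_add _ _ (mem_univ j),
    smul_lie, lie_self, smul_zero, add_zero, smul_neg, smul_sum, smul_sum,
    ← sum_neg_distrib, ← sum_add_distrib]
  refine sum_congr rfl fun k hk ↦ ?_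
  have hkj : k ≠ j := ne_of_mem_erase hk
  rw [hoff k j hkj, ← lie_skew (A j) (A k), smul_lie]
  match_scalars
  have := sub_ne_zero.2 (hz k)
  have := sub_ne_zero.2 (hz j)
  have := sub_ne_zero.2 (hc.ne hkj)
  have := sub_ne_zero.2 (hc.ne hkj.symm)
  field_simp
  ring

theorem garnier_isospectral_general
    (r N : ℕ)
    (c : Fin N → ℂ) (hc : ∀ i j : Fin N, i ≠ j → c i ≠ c j)
    (U : Set (Fin N → ℂ)) (hUo : IsOpen U) (hUc : IsConnected U)
    (A : Fin N → (Fin N → ℂ) → Matrix (Fin r) (Fin r) ℂ)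
    (hA : ∀ i, DifferentiableOn ℂ (A i) U)
    (hGar : ∀ i j : Fin N, ∀ t ∈ U,
        (i ≠ j → fderiv ℂ (A i) t (Pi.single j 1)
            = (c i - c j)⁻¹ • ⁅A i t, A j t⁆) ∧
        fderiv ℂ (A i) t (Pi.single i 1)
            = -∑ k ∈ Finset.univ.erase i, (c i - c k)⁻¹ • ⁅A i t, A k t⁆) :
    ∀ z : ℂ, (∀ k : Fin N, z ≠ c k) → ∀ μ : ℂ, ∀ t ∈ U, ∀ t' ∈ U,
      (∑ k, (z - c k)⁻¹ • A k t - μ • (1 : Matrix (Fin r) (Fin r) ℂ)).det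
        = (∑ k, (z - c k)⁻¹ • A k t' - μ • (1 : Matrix (Fin r) (Fin r) ℂ)).det := by
  intro z hz μ t ht t' ht'
  let : LieRing (Matrix (Fin r) (Fin r) ℂ) := LieRing.ofAssociativeRing
  have hc' : Function.Injective c := fun i j ↦ not_imp_not.1 (hc i j)
  let M t := ∑ k, (z - c k)⁻¹ • A k t
  let M' t := ∑ k, (z - c k)⁻¹ • fderiv ℂ (A k) t
  have hM (s : Fin N → ℂ) (hs : s ∈ U) : HasFDerivAt (fun x ↦ M x - μ • 1) (M' s) s :=
    (HasFDerivAt.fun_sum fun k _ ↦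
      ((hA k).differentiableAt (hUo.mem_nhds hs)).hasFDerivAt.fun_const_smul _).sub_const _
  have hlax (s : Fin N → ℂ) (hs : s ∈ U) (j : Fin N) :
      M' s (Pi.single j 1) = ⁅M s - μ • 1, (z - c j)⁻¹ • A j s⁆ := by
    rw [sub_lie, ((Commute.one_left ((z - c j)⁻¹ • A j s)).smul_left μ).lie_eq, sub_zero,
      lie_smul]
    simpa [M'] using garnier_sum_smul_eq_lie hc' (fun i j ↦ (hGar i j s hs).1)
      (fun i ↦ (hGar i i s hs).2) hz j
  exact Matrix.det_eq_of_hasFDerivAt_eq_lie hUo hUc.isPreconnected hM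
    (fun s hs v ↦ ⟨_, LinearMap.apply_eq_lie_sum_smul (M' s).toLinearMap _ _ (hlax s hs) v⟩)
    ht ht'

/-- **Garnier's autonomous system is isospectral.**
If holomorphic `A₁,…,A_N : U → Mₙ(ℂ)` on a connected open `U ⊆ ℂ^N` satisfy Garnier's
autonomous system (with pairwise distinct constants `c₁,…,c_N`), then for every
`λ ∉ {c_1,…,c_N}` and every `μ ∈ ℂ` the characteristic function
`t ↦ det(M(λ,t) − μ I)`, with `M(λ,t) = Σ_i A_i(t)/(λ−c_i)`, is constant on `U`. -/
theorem garnier_isospectral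
    (r N : ℕ) (hr : 1 ≤ r) (hN : 2 ≤ N)
    (c : Fin N → ℂ) (hc : ∀ i j : Fin N, i ≠ j → c i ≠ c j)
    (U : Set (Fin N → ℂ)) (hUo : IsOpen U) (hUc : IsConnected U)
    (A : Fin N → (Fin N → ℂ) → Matrix (Fin r) (Fin r) ℂ)
    (hA : ∀ i, DifferentiableOn ℂ (A i) U)
    (hGar : ∀ i j : Fin N, ∀ t ∈ U,
        (i ≠ j → fderiv ℂ (A i) t (Pi.single j 1)
            = (c i - c j)⁻¹ • ⁅A i t, A j t⁆) ∧
        fderiv ℂ (A i) t (Pi.single i 1)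
            = -∑ k ∈ Finset.univ.erase i, (c i - c k)⁻¹ • ⁅A i t, A k t⁆) :
    ∀ z : ℂ, (∀ k : Fin N, z ≠ c k) → ∀ μ : ℂ, ∀ t ∈ U, ∀ t' ∈ U,
      (∑ k, (z - c k)⁻¹ • A k t - μ • (1 : Matrix (Fin r) (Fin r) ℂ)).det
        = (∑ k, (z - c k)⁻¹ • A k t' - μ • (1 : Matrix (Fin r) (Fin r) ℂ)).det :=
  garnier_isospectral_general r N c hc U hUo hUc A hA hGar
end

section
/- Let r ≥ 1, N ≥ 2, and let A_1,…,A_N : U → M_r(ℂ) be holomorphic on a connected open set U ⊆ ℂ^N all of whose points have pairwise distinct coordinates, satisfying the Schlesinger equation. Then for each i the characteristic polynomial of A_i(t) is independent of t; in particular, the eigenvalues of each A_i (counted with multiplicity) are invariants of the Schlesinger flows (the coadjoint orbit invariants). -/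
/-!
By Jacobi's formula, the derivative of `det (x - A_i)` in a direction `v` is
`-tr (adj (x - A_i) * ∂_v A_i)`. The Schlesinger equation makes every `∂_v A_i` a commutator
`⁅A_i, Q⁆`, and `adj (x - A_i)` commutes with `A_i`, so this trace vanishes. Each value of the
characteristic polynomial of `A_i` is therefore locally constant, hence constant on the connected
set `U`.
-/

open Matrix Finset

attribute [local instance] Matrix.normedAddCommGroup Matrix.normedSpace

namespace Matrix

variable {n R : Type*} [Fintype n] [DecidableEq n] [CommRing R]

theorem commute_adjugate_scalar_sub (x : R) (P : Matrix n n R) :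
    Commute (adjugate (scalar n x - P)) P := by
  have h : Commute (adjugate (scalar n x - P)) (scalar n x - P) := by
    rw [Commute, SemiconjBy, adjugate_mul, mul_adjugate]
  simpa using (scalar_commute x (fun _ => Commute.all _ _) _).symm.sub_right h

omit [DecidableEq n] in
theorem trace_mul_lie_eq_zero_of_commute {B P : Matrix n n R} (h : Commute B P)
    (Q : Matrix n n R) : (B * ⁅P, Q⁆).trace = 0 := by
  rw [Ring.lie_def, Matrix.mul_sub, trace_sub, ← Matrix.mul_assoc, h.eq, Matrix.mul_assoc,
    ← Matrix.mul_assoc B, trace_mul_comm _ P, sub_self]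

theorem det_updateRow_eq_sum_adjugate_mul (M : Matrix n n R) (i : n) (v : n → R) :
    (M.updateRow i v).det = ∑ j, M.adjugate j i * v j := by
  rw [← cramer_transpose_apply, cramer_eq_adjugate_mulVec, ← adjugate_transpose]
  rfl

theorem sum_det_updateRow_eq_trace_adjugate_mul (M H : Matrix n n R) :
    ∑ i, (M.updateRow i (H i)).det = (M.adjugate * H).trace := by
  simp only [det_updateRow_eq_sum_adjugate_mul, trace, diag, mul_apply]
  exact Finset.sum_comm

theorem hasFDerivAt_det {𝕜 : Type*} [NontriviallyNormedField 𝕜] [CompleteSpace 𝕜]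
    (M : Matrix n n 𝕜) :
    HasFDerivAt det
      ((traceLinearMap n 𝕜 𝕜 ∘ₗ LinearMap.mulLeft 𝕜 M.adjugate).toContinuousLinearMap) M := by
  let D : ContinuousMultilinearMap 𝕜 (fun _ : n => n → 𝕜) 𝕜 :=
    ⟨(detRowAlternating : (n → 𝕜) [⋀^n]→ₗ[𝕜] 𝕜).toMultilinearMap, continuous_id.matrix_det⟩
  refine (D.hasFDerivAt M).congr_fderiv ?_
  ext H
  exact (D.linearDeriv_apply M H).trans (sum_det_updateRow_eq_trace_adjugate_mul M H)

theorem hasFDerivAt_eval_charpoly_zero_of_eq_lie {𝕜 E : Type*} [NontriviallyNormedField 𝕜]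
    [CompleteSpace 𝕜] [NormedAddCommGroup E] [NormedSpace 𝕜 E] {f : E → Matrix n n 𝕜}
    {f' : E →L[𝕜] Matrix n n 𝕜} {t : E} (hf : HasFDerivAt f f' t)
    (hlax : ∀ v, ∃ Q, f' v = ⁅f t, Q⁆) (x : 𝕜) :
    HasFDerivAt (fun s => (f s).charpoly.eval x) (0 : E →L[𝕜] 𝕜) t := by
  simp_rw [eval_charpoly]
  refine ((hasFDerivAt_det _).comp t (hf.const_sub (scalar n x))).congr_fderiv ?_
  ext v
  obtain ⟨Q, hQ⟩ := hlax v
  change trace (adjugate (scalar n x - f t) * -f' v) = 0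
  rw [hQ, Matrix.mul_neg, trace_neg,
    trace_mul_lie_eq_zero_of_commute (commute_adjugate_scalar_sub x (f t)), neg_zero]

theorem charpoly_eq_of_fderiv_eq_lie {𝕜 E : Type*} [RCLike 𝕜] [NormedAddCommGroup E]
    [NormedSpace ℝ E] [NormedSpace 𝕜 E] {f : E → Matrix n n 𝕜} {U : Set E} (hUo : IsOpen U)
    (hUc : IsPreconnected U) (hf : DifferentiableOn 𝕜 f U)
    (hlax : ∀ t ∈ U, ∀ v, ∃ Q, fderiv 𝕜 f t v = ⁅f t, Q⁆) {t t' : E} (ht : t ∈ U)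
    (ht' : t' ∈ U) : (f t).charpoly = (f t').charpoly := by
  have hderiv : ∀ s ∈ U, ∀ x : 𝕜, HasFDerivAt (fun s => (f s).charpoly.eval x) 0 s :=
    fun s hs => hasFDerivAt_eval_charpoly_zero_of_eq_lie
      (hf.differentiableAt (hUo.mem_nhds hs)).hasFDerivAt (hlax s hs)
  exact Polynomial.funext fun x => hUo.is_const_of_fderiv_eq_zero hUc
    (fun s hs => (hderiv s hs x).differentiableAt.differentiableWithinAt)
    (fun s hs => (hderiv s hs x).fderiv) ht ht'

end Matrix

section

variable {ι n 𝕜 : Type*} [Fintype ι] [DecidableEq ι] [Fintype n] [DecidableEq n]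
  [NontriviallyNormedField 𝕜]

theorem exists_fderiv_eq_lie_of_pi_single {f : (ι → 𝕜) → Matrix n n 𝕜} {t : ι → 𝕜}
    (h : ∀ j, ∃ Q, fderiv 𝕜 f t (Pi.single j 1) = ⁅f t, Q⁆) (v : ι → 𝕜) :
    ∃ Q, fderiv 𝕜 f t v = ⁅f t, Q⁆ := by
  -- the commutator Lie ring of an associative ring is not a global instance; it supplies the
  -- bilinearity lemmas `lie_sum`, `lie_smul` for the matrix commutator
  let _ := LieRing.ofAssociativeRing (A := Matrix n n 𝕜)
  choose Q hQ using h
  refine ⟨∑ j, v j • Q j, ?_⟩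
  conv_lhs => rw [pi_eq_sum_univ' v, map_sum]
  simp only [map_smul, hQ, lie_sum, lie_smul]

theorem exists_fderiv_single_eq_lie_of_schlesinger {F : ι → (ι → 𝕜) → Matrix n n 𝕜}
    {t : ι → 𝕜} {i : ι}
    (hSch : ∀ j, (i ≠ j → fderiv 𝕜 (F i) t (Pi.single j 1) = (t i - t j)⁻¹ • ⁅F i t, F j t⁆) ∧
        fderiv 𝕜 (F i) t (Pi.single i 1)
          = -∑ k ∈ Finset.univ.erase i, (t i - t k)⁻¹ • ⁅F i t, F k t⁆)
    (j : ι) : ∃ Q, fderiv 𝕜 (F i) t (Pi.single j 1) = ⁅F i t, Q⁆ := by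
  let _ := LieRing.ofAssociativeRing (A := Matrix n n 𝕜)
  obtain rfl | hij := eq_or_ne i j
  · exact ⟨-∑ k ∈ univ.erase i, (t i - t k)⁻¹ • F k t, by
      simp only [(hSch i).2, lie_neg, lie_sum, lie_smul]⟩
  · exact ⟨(t i - t j)⁻¹ • F j t, by rw [(hSch j).1 hij, lie_smul]⟩

end

theorem schlesinger_charpoly_invariant_general
    (r N : ℕ)
    (U : Set (Fin N → ℂ)) (hUo : IsOpen U) (hUc : IsConnected U)
    (A : Fin N → (Fin N → ℂ) → Matrix (Fin r) (Fin r) ℂ)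
    (hA : ∀ i, DifferentiableOn ℂ (A i) U)
    (hSch : ∀ i j : Fin N, ∀ t ∈ U,
        (i ≠ j → fderiv ℂ (A i) t (Pi.single j 1)
            = (t i - t j)⁻¹ • ⁅A i t, A j t⁆) ∧
        fderiv ℂ (A i) t (Pi.single i 1)
            = -∑ k ∈ Finset.univ.erase i, (t i - t k)⁻¹ • ⁅A i t, A k t⁆) :
    ∀ i : Fin N, ∀ t ∈ U, ∀ t' ∈ U, (A i t).charpoly = (A i t').charpoly := by
  intro i t ht t' ht'
  refine charpoly_eq_of_fderiv_eq_lie hUo hUc.isPreconnected (hA i) (fun s hs => ?_) ht ht'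
  exact exists_fderiv_eq_lie_of_pi_single
    (exists_fderiv_single_eq_lie_of_schlesinger (hSch i · s hs))

/-- **Coadjoint orbit invariants of the Schlesinger equation.**
If holomorphic `A₁,…,A_N : U → Mₙ(ℂ)` satisfy the Schlesinger equation on a connected open
set `U ⊆ ℂ^N` whose points have pairwise distinct coordinates, then the characteristic
polynomial of each `A_i(t)` is independent of `t`; in particular the eigenvalues of each
`A_i` (with multiplicity) are invariants of the Schlesinger flows. -/
theorem schlesinger_charpoly_invariant
    (r N : ℕ) (hr : 1 ≤ r) (hN : 2 ≤ N)
    (U : Set (Fin N → ℂ)) (hUo : IsOpen U) (hUc : IsConnected U)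
    (hUd : ∀ t ∈ U, ∀ i j : Fin N, i ≠ j → t i ≠ t j)
    (A : Fin N → (Fin N → ℂ) → Matrix (Fin r) (Fin r) ℂ)
    (hA : ∀ i, DifferentiableOn ℂ (A i) U)
    (hSch : ∀ i j : Fin N, ∀ t ∈ U,
        (i ≠ j → fderiv ℂ (A i) t (Pi.single j 1)
            = (t i - t j)⁻¹ • ⁅A i t, A j t⁆) ∧
        fderiv ℂ (A i) t (Pi.single i 1)
            = -∑ k ∈ Finset.univ.erase i, (t i - t k)⁻¹ • ⁅A i t, A k t⁆) :
    ∀ i : Fin N, ∀ t ∈ U, ∀ t' ∈ U, (A i t).charpoly = (A i t').charpoly :=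
  schlesinger_charpoly_invariant_general r N U hUo hUc A hA hSch
end

section
/- Let r ≥ 1, N ≥ 2, let A_1,…,A_N be r×r complex matrices and t_1,…,t_N pairwise distinct complex numbers. For each pair of indices i, k define the matrix D_{k}H_i by D_kH_i = A_i/(t_i − t_k) for k ≠ i and D_iH_i = Σ_{k≠i} A_k/(t_i − t_k) (the matrix gradients of the Schlesinger Hamiltonian H_i with respect to the trace pairing). Then the Schlesinger Hamiltonians are in involution with respect to the Kostant–Kirillov Poisson bracket: for all i and j, Σ_{k=1}^N Tr( A_k · [D_kH_i, D_kH_j] ) = 0. -/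
/-!
Expanding the bracket bilinearly, every term is a multiple of `Tr(A_l [A_i, A_j])`, because
`(X, Y, Z) ↦ Tr(X [Y, Z])` is invariant under cyclic permutations and antisymmetric. For
`l ∉ {i, j}` the total coefficient is
`1/((t_i-t_l)(t_j-t_l)) - 1/((t_i-t_l)(t_j-t_i)) - 1/((t_i-t_j)(t_j-t_l))`, which vanishes by
partial fractions; for `l ∈ {i, j}` the trace itself vanishes.
-/

open Matrix Finset

namespace Matrix

attribute [local instance] LieRing.ofAssociativeRing

variable {n R : Type*} [Fintype n] [DecidableEq n] [CommRing R]

theorem trace_mul_lie_cycle (X Y Z : Matrix n n R) :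
    trace (X * ⁅Y, Z⁆) = trace (Y * ⁅Z, X⁆) := by
  simp only [Ring.lie_def, Matrix.mul_sub, trace_sub, ← Matrix.mul_assoc]
  rw [trace_mul_cycle Y Z X, trace_mul_cycle Y X Z, trace_mul_cycle Z Y X]

theorem trace_mul_lie_swap (X Y Z : Matrix n n R) :
    trace (X * ⁅Y, Z⁆) = -trace (X * ⁅Z, Y⁆) := by
  rw [← lie_skew Y Z, Matrix.mul_neg, trace_neg]

end Matrix

theorem inv_sub_mul_inv_sub_eq_add {K : Type*} [Field K] {a b c : K}
    (hab : a ≠ b) (hac : a ≠ c) (hbc : b ≠ c) :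
    (a - c)⁻¹ * (b - c)⁻¹ = (a - c)⁻¹ * (b - a)⁻¹ + (a - b)⁻¹ * (b - c)⁻¹ := by
  have := sub_ne_zero.2 hab
  have := sub_ne_zero.2 hac
  have := sub_ne_zero.2 hbc
  have := sub_ne_zero.2 hab.symm
  field_simp
  ring

section Schlesinger

attribute [local instance] LieRing.ofAssociativeRing

variable {ι n K : Type*} [Fintype ι] [DecidableEq ι] [Field K] (t : ι → K) (A : ι → Matrix n n K)

/-- `schlesingerGrad t A i k` is `D_k H_i`; the summand `l = i` of the case `k = i` vanishes
because `0⁻¹ = 0`. -/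
def schlesingerGrad (i k : ι) : Matrix n n K :=
  if k = i then ∑ l, (t i - t l)⁻¹ • A l else (t i - t k)⁻¹ • A i

theorem schlesingerGrad_eq_sum_erase (i k : ι) : schlesingerGrad t A i k =
    if k = i then ∑ l ∈ univ.erase i, (t i - t l)⁻¹ • A l else (t i - t k)⁻¹ • A i := by
  rw [schlesingerGrad, sum_erase _ (by rw [sub_self, _root_.inv_zero, zero_smul])]

variable [Fintype n] [DecidableEq n] {t} {i j : ι}

theorem trace_mul_lie_schlesingerGrad_self_left (hij : i ≠ j) :
    trace (A i * ⁅schlesingerGrad t A i i, schlesingerGrad t A j i⁆) =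
      -∑ l, (t i - t l)⁻¹ * (t j - t i)⁻¹ * trace (A l * ⁅A i, A j⁆) := by
  simp only [schlesingerGrad, if_pos, if_neg hij, sum_lie, smul_lie, lie_smul, Matrix.mul_sum,
    Matrix.mul_smul, trace_sum, trace_smul, smul_eq_mul]
  rw [mul_sum, ← sum_neg_distrib]
  refine sum_congr rfl fun l _ => ?_
  rw [trace_mul_lie_cycle, trace_mul_lie_swap]
  ring

theorem trace_mul_lie_schlesingerGrad_self_right (hij : i ≠ j) :
    trace (A j * ⁅schlesingerGrad t A i j, schlesingerGrad t A j j⁆) =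
      -∑ l, (t i - t j)⁻¹ * (t j - t l)⁻¹ * trace (A l * ⁅A i, A j⁆) := by
  simp only [schlesingerGrad, if_pos, if_neg hij.symm, lie_sum, smul_lie, lie_smul,
    Matrix.mul_sum, Matrix.mul_smul, trace_sum, trace_smul, smul_eq_mul]
  rw [← sum_neg_distrib]
  refine sum_congr rfl fun l _ => ?_
  rw [trace_mul_lie_cycle, trace_mul_lie_cycle, trace_mul_lie_swap]
  ring

theorem trace_mul_lie_schlesingerGrad_of_ne {k : ι} (hki : k ≠ i) (hkj : k ≠ j) :
    trace (A k * ⁅schlesingerGrad t A i k, schlesingerGrad t A j k⁆) =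
      (t i - t k)⁻¹ * (t j - t k)⁻¹ * trace (A k * ⁅A i, A j⁆) := by
  simp only [schlesingerGrad, if_neg hki, if_neg hkj, smul_lie, lie_smul, Matrix.mul_smul,
    trace_smul, smul_eq_mul, smul_smul]
  ring

theorem sum_trace_mul_lie_schlesingerGrad (ht : Function.Injective t) (i j : ι) :
    ∑ k, trace (A k * ⁅schlesingerGrad t A i k, schlesingerGrad t A j k⁆) = 0 := by
  rcases eq_or_ne i j with rfl | hij
  · simp
  set τ : ι → K := fun l => trace (A l * ⁅A i, A j⁆)
  have hterm : ∀ k, trace (A k * ⁅schlesingerGrad t A i k, schlesingerGrad t A j k⁆) =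
      (if k = i then -∑ l, (t i - t l)⁻¹ * (t j - t i)⁻¹ * τ l else 0) +
      (if k = j then -∑ l, (t i - t j)⁻¹ * (t j - t l)⁻¹ * τ l else 0) +
      (t i - t k)⁻¹ * (t j - t k)⁻¹ * τ k := by
    intro k
    rcases eq_or_ne k i with rfl | hki
    · simp [trace_mul_lie_schlesingerGrad_self_left A hij, hij, τ]
    rcases eq_or_ne k j with rfl | hkj
    · simp [trace_mul_lie_schlesingerGrad_self_right A hij, hki, τ]
    simp [trace_mul_lie_schlesingerGrad_of_ne A hki hkj, hki, hkj, τ]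
  have hτi : τ i = 0 := by
    show trace (A i * ⁅A i, A j⁆) = 0
    rw [trace_mul_lie_cycle, trace_mul_lie_cycle, lie_self, Matrix.mul_zero, trace_zero]
  have hτj : τ j = 0 := by
    show trace (A j * ⁅A i, A j⁆) = 0
    rw [trace_mul_lie_cycle, lie_self, Matrix.mul_zero, trace_zero]
  have hcoeff : ∀ l, ((t i - t l)⁻¹ * (t j - t l)⁻¹ - (t i - t l)⁻¹ * (t j - t i)⁻¹
      - (t i - t j)⁻¹ * (t j - t l)⁻¹) * τ l = 0 := by
    intro l
    rcases eq_or_ne l i with rfl | hli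
    · rw [hτi, mul_zero]
    rcases eq_or_ne l j with rfl | hlj
    · rw [hτj, mul_zero]
    rw [inv_sub_mul_inv_sub_eq_add (ht.ne hij) (ht.ne hli.symm) (ht.ne hlj.symm)]
    ring
  simp only [sum_congr rfl fun k _ => hterm k, sum_add_distrib, sum_ite_eq', mem_univ, if_true]
  rw [← sum_eq_zero fun l _ => hcoeff l]
  simp only [sub_mul, sum_sub_distrib]
  ring

end Schlesinger

theorem schlesinger_hamiltonians_in_involution_general
    (r N : ℕ)
    (A : Fin N → Matrix (Fin r) (Fin r) ℂ)
    (t : Fin N → ℂ) (ht : ∀ i j : Fin N, i ≠ j → t i ≠ t j)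
    (D : Fin N → Fin N → Matrix (Fin r) (Fin r) ℂ)
    (hD : ∀ i k : Fin N,
      D k i = if k = i then ∑ l ∈ Finset.univ.erase i, (t i - t l)⁻¹ • A l
              else (t i - t k)⁻¹ • A i) :
    ∀ i j : Fin N, ∑ k, Matrix.trace (A k * ⁅D k i, D k j⁆) = 0 := by
  obtain rfl : D = fun k i => schlesingerGrad t A i k := by
    funext k i
    rw [hD, schlesingerGrad_eq_sum_erase]
  exact sum_trace_mul_lie_schlesingerGrad A fun i j => not_imp_not.1 (ht i j)

/-- **Involutivity of the Schlesinger Hamiltonians.**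
For `r×r` matrices `A₁,…,A_N` and pairwise distinct `t₁,…,t_N`, let `D_kH_i` denote the
matrix gradient of the Schlesinger Hamiltonian `H_i = Σ_{j≠i} Tr(A_iA_j)/(t_i−t_j)` with
respect to `A_k`: `D_kH_i = A_i/(t_i−t_k)` for `k ≠ i` and
`D_iH_i = Σ_{k≠i} A_k/(t_i−t_k)`. Then the Kostant–Kirillov Poisson bracket
`{H_i,H_j} = Σ_k Tr(A_k [D_kH_i, D_kH_j])` vanishes for all `i, j`. -/
theorem schlesinger_hamiltonians_in_involution
    (r N : ℕ) (hr : 1 ≤ r) (hN : 2 ≤ N)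
    (A : Fin N → Matrix (Fin r) (Fin r) ℂ)
    (t : Fin N → ℂ) (ht : ∀ i j : Fin N, i ≠ j → t i ≠ t j)
    (D : Fin N → Fin N → Matrix (Fin r) (Fin r) ℂ)
    (hD : ∀ i k : Fin N,
      D k i = if k = i then ∑ l ∈ Finset.univ.erase i, (t i - t l)⁻¹ • A l
              else (t i - t k)⁻¹ • A i) :
    ∀ i j : Fin N, ∑ k, Matrix.trace (A k * ⁅D k i, D k j⁆) = 0 :=
  schlesinger_hamiltonians_in_involution_general r N A t ht D hD
end

section
/- Let r ≥ 1, N ≥ 2, and let A_1,…,A_N : U → M_r(ℂ) be holomorphic on a connected open set U ⊆ ℂ^N all of whose points have pairwise distinct coordinates, satisfying the Schlesinger equation. Define H_i(t) = Σ_{k≠i} Tr(A_i(t) A_k(t))/(t_i − t_k). Then the 1-form Σ_{i=1}^N H_i dt_i is closed: for all i and j, ∂H_i/∂t_j = ∂H_j/∂t_i on U. Consequently a tau function with d log τ = Σ_i H_i dt_i exists locally. -/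
/-!
For `i ≠ j` the Schlesinger equation gives `∂H_i/∂t_j = Tr(A_i A_j) / (t_i - t_j)²`, which is
symmetric in `i` and `j`. Only the derivative of the denominator `(t_i - t_j)⁻¹` survives: by the
invariance `Tr(⁅X, Y⁆ Z) = Tr(X ⁅Y, Z⁆)` of the trace form, differentiating the numerator of the
`k`-th term (`k ≠ i, j`) gives `c_k / ((t_i - t_j)(t_j - t_k))` with `c_k = Tr(A_i ⁅A_j, A_k⁆)`,
and these cancel exactly against the contribution of `∂A_j/∂t_j` to the `k = j` term.
-/

open Matrix Finset

attribute [local instance] Matrix.normedAddCommGroup Matrix.normedSpace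

section Trace

variable {n R : Type*} [Fintype n] [CommRing R]

theorem Matrix.trace_lie_mul (X Y Z : Matrix n n R) :
    trace (⁅X, Y⁆ * Z) = trace (X * ⁅Y, Z⁆) := by
  simp only [Ring.lie_def, sub_mul, mul_sub, trace_sub, mul_assoc]
  rw [trace_mul_comm Y (X * Z), mul_assoc]

theorem Matrix.trace_lie_mul_right_self (X Y : Matrix n n R) : trace (⁅X, Y⁆ * Y) = 0 := by
  rw [trace_lie_mul, Ring.lie_def, sub_self, mul_zero, trace_zero]

theorem Matrix.trace_mul_lie_left_self (X Y : Matrix n n R) : trace (X * ⁅Y, X⁆) = 0 := by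
  rw [trace_mul_comm, trace_lie_mul, Ring.lie_def, sub_self, mul_zero, trace_zero]

end Trace

section Calculus

variable {𝕜 : Type*} [NontriviallyNormedField 𝕜] {E : Type*} [NormedAddCommGroup E]
  [NormedSpace 𝕜 E] {x : E}

theorem fderiv_div_apply {c d : E → 𝕜} (hc : DifferentiableAt 𝕜 c x)
    (hd : DifferentiableAt 𝕜 d x) (hdx : d x ≠ 0) (v : E) :
    fderiv 𝕜 (fun y => c y / d y) x v
      = fderiv 𝕜 c x v / d x - c x * fderiv 𝕜 d x v / d x ^ 2 := by
  have hinv : HasFDerivAt (fun y => (d y)⁻¹) (-(d x ^ 2)⁻¹ • fderiv 𝕜 d x) x :=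
    (hasDerivAt_inv hdx).comp_hasFDerivAt x hd.hasFDerivAt
  simp only [div_eq_mul_inv]
  rw [(hc.hasFDerivAt.fun_mul hinv).fderiv]
  simp only [_root_.add_apply, _root_.smul_apply, smul_eq_mul]
  ring

variable [CompleteSpace 𝕜] {n : Type*} [Fintype n] {f g : E → Matrix n n 𝕜}

variable (𝕜 n) in
noncomputable def Matrix.traceMulBilin : Matrix n n 𝕜 →L[𝕜] Matrix n n 𝕜 →L[𝕜] 𝕜 :=
  ((LinearMap.mul 𝕜 (Matrix n n 𝕜)).compr₂ (traceLinearMap n 𝕜 𝕜)).toContinuousBilinearMap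

theorem DifferentiableAt.trace_mul (hf : DifferentiableAt 𝕜 f x) (hg : DifferentiableAt 𝕜 g x) :
    DifferentiableAt 𝕜 (fun y => trace (f y * g y)) x :=
  ((traceMulBilin 𝕜 n).hasFDerivAt_of_bilinear hf.hasFDerivAt hg.hasFDerivAt).differentiableAt

theorem fderiv_trace_mul_apply (hf : DifferentiableAt 𝕜 f x) (hg : DifferentiableAt 𝕜 g x)
    (v : E) :
    fderiv 𝕜 (fun y => trace (f y * g y)) x v
      = trace (fderiv 𝕜 f x v * g x + f x * fderiv 𝕜 g x v) := by
  have h : HasFDerivAt (fun y => trace (f y * g y)) _ x :=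
    (traceMulBilin 𝕜 n).hasFDerivAt_of_bilinear hf.hasFDerivAt hg.hasFDerivAt
  rw [h.fderiv, trace_add, add_comm]
  rfl

end Calculus

theorem sum_trace_schlesinger_eq_zero {ι n K : Type*} [Fintype ι] [DecidableEq ι] [Fintype n]
    [Field K] (X V : ι → Matrix n n K) {t : ι → K} (ht : Function.Injective t) {i j : ι}
    (hij : i ≠ j) (hV : ∀ k, k ≠ j → V k = (t k - t j)⁻¹ • ⁅X k, X j⁆)
    (hVj : V j = -∑ l ∈ univ.erase j, (t j - t l)⁻¹ • ⁅X j, X l⁆) :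
    ∑ k ∈ univ.erase i, trace (V i * X k + X i * V k) / (t i - t k) = 0 := by
  have hsub : ∀ {a b : ι}, a ≠ b → t a - t b ≠ 0 := fun h => sub_ne_zero.2 (ht.ne h)
  set others := (univ.erase i).erase j
  have hterm : ∀ k ∈ others, trace (V i * X k + X i * V k) / (t i - t k)
      = trace (X i * ⁅X j, X k⁆) / ((t i - t j) * (t j - t k)) := by
    intro k hk
    obtain ⟨hkj, hki⟩ : k ≠ j ∧ k ≠ i :=
      ⟨ne_of_mem_erase hk, ne_of_mem_erase (mem_of_mem_erase hk)⟩
    have hswap : ⁅X k, X j⁆ = -⁅X j, X k⁆ := by rw [Ring.lie_def, Ring.lie_def, neg_sub]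
    rw [hV i hij, hV k hkj, trace_add, smul_mul, Matrix.mul_smul, trace_smul, trace_smul,
      trace_lie_mul, hswap, mul_neg, trace_neg, smul_eq_mul, smul_eq_mul]
    have := hsub hij; have := hsub hki.symm; have := hsub hkj; have := hsub hkj.symm
    field_simp
    ring
  have hj : trace (V i * X j + X i * V j) / (t i - t j)
      = -∑ k ∈ others, trace (X i * ⁅X j, X k⁆) / ((t i - t j) * (t j - t k)) := by
    rw [hV i hij, hVj, trace_add, smul_mul, trace_smul, trace_lie_mul_right_self, mul_neg, mul_sum,
      trace_neg, trace_sum, ← sum_erase_add _ _ (mem_erase.2 ⟨hij, mem_univ i⟩), Matrix.mul_smul,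
      trace_smul, trace_mul_lie_left_self, smul_zero, smul_zero, add_zero, zero_add,
      erase_right_comm, neg_div, sum_div]
    refine congrArg _ (sum_congr rfl fun k _ => ?_)
    rw [Matrix.mul_smul, trace_smul, smul_eq_mul]
    field_simp
  rw [← sum_erase_add _ _ (mem_erase.2 ⟨Ne.symm hij, mem_univ j⟩), sum_congr rfl hterm, hj,
    add_neg_cancel]

section Hamiltonian

variable {𝕜 ι n : Type*} [NontriviallyNormedField 𝕜] [Fintype ι] [DecidableEq ι] [Fintype n]

def schlesingerHamiltonian (A : ι → (ι → 𝕜) → Matrix n n 𝕜) (i : ι) (s : ι → 𝕜) : 𝕜 :=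
  ∑ k ∈ univ.erase i, trace (A i s * A k s) / (s i - s k)

theorem fderiv_schlesingerHamiltonian_apply_single [CompleteSpace 𝕜]
    {A : ι → (ι → 𝕜) → Matrix n n 𝕜} {t : ι → 𝕜} (ht : Function.Injective t)
    (hA : ∀ k, DifferentiableAt 𝕜 (A k) t) {i j : ι} (hij : i ≠ j)
    (hV : ∀ k, k ≠ j → fderiv 𝕜 (A k) t (Pi.single j 1) = (t k - t j)⁻¹ • ⁅A k t, A j t⁆)
    (hVj : fderiv 𝕜 (A j) t (Pi.single j 1)
      = -∑ l ∈ univ.erase j, (t j - t l)⁻¹ • ⁅A j t, A l t⁆) :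
    fderiv 𝕜 (schlesingerHamiltonian A i) t (Pi.single j 1)
      = trace (A i t * A j t) / (t i - t j) ^ 2 := by
  set v : ι → 𝕜 := Pi.single j 1
  have hsub : ∀ {k}, k ∈ univ.erase i → t i - t k ≠ 0 := fun hk =>
    sub_ne_zero.2 (ht.ne (ne_of_mem_erase hk).symm)
  have hdiff_sub : ∀ k, HasFDerivAt (fun s : ι → 𝕜 => s i - s k)
      (ContinuousLinearMap.proj i - ContinuousLinearMap.proj k) t := fun k =>
    (hasFDerivAt_apply (𝕜 := 𝕜) i t).fun_sub (hasFDerivAt_apply k t)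
  have hterm : ∀ k ∈ univ.erase i,
      fderiv 𝕜 (fun s => trace (A i s * A k s) / (s i - s k)) t v
        = trace (fderiv 𝕜 (A i) t v * A k t + A i t * fderiv 𝕜 (A k) t v) / (t i - t k)
          - trace (A i t * A k t) * (v i - v k) / (t i - t k) ^ 2 := fun k hk => by
    rw [fderiv_div_apply ((hA i).trace_mul (hA k)) (hdiff_sub k).differentiableAt (hsub hk),
      fderiv_trace_mul_apply (hA i) (hA k), (hdiff_sub k).fderiv]
    rfl
  have hdiff : ∀ k ∈ univ.erase i,
      DifferentiableAt 𝕜 (fun s => trace (A i s * A k s) / (s i - s k)) t := fun k hk => by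
    simp only [div_eq_mul_inv]
    exact ((hA i).trace_mul (hA k)).mul ((hdiff_sub k).differentiableAt.inv (hsub hk))
  unfold schlesingerHamiltonian
  rw [fderiv_fun_sum hdiff, _root_.sum_apply, sum_congr rfl hterm, sum_sub_distrib,
    sum_trace_schlesinger_eq_zero _ _ ht hij hV hVj, zero_sub,
    sum_eq_single_of_mem j (mem_erase.2 ⟨hij.symm, mem_univ j⟩)]
  · simp [v, hij, neg_div]
  · intro k _ hkj
    simp [v, hij, hkj]

end Hamiltonian

theorem schlesinger_one_form_closed_general
    (r N : ℕ)
    (U : Set (Fin N → ℂ)) (hUo : IsOpen U)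
    (hUd : ∀ t ∈ U, ∀ i j : Fin N, i ≠ j → t i ≠ t j)
    (A : Fin N → (Fin N → ℂ) → Matrix (Fin r) (Fin r) ℂ)
    (hA : ∀ i, DifferentiableOn ℂ (A i) U)
    (hSch : ∀ i j : Fin N, ∀ t ∈ U,
        (i ≠ j → fderiv ℂ (A i) t (Pi.single j 1)
            = (t i - t j)⁻¹ • ⁅A i t, A j t⁆) ∧
        fderiv ℂ (A i) t (Pi.single i 1)
            = -∑ k ∈ Finset.univ.erase i, (t i - t k)⁻¹ • ⁅A i t, A k t⁆)
    (H : Fin N → (Fin N → ℂ) → ℂ)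
    (hH : ∀ i : Fin N, ∀ t : Fin N → ℂ,
        H i t = ∑ k ∈ Finset.univ.erase i, Matrix.trace (A i t * A k t) / (t i - t k)) :
    ∀ i j : Fin N, ∀ t ∈ U,
      fderiv ℂ (H i) t (Pi.single j 1) = fderiv ℂ (H j) t (Pi.single i 1) := by
  obtain rfl : H = schlesingerHamiltonian A := funext fun i => funext (hH i)
  intro i j t ht
  rcases eq_or_ne i j with rfl | hij
  · rfl
  have hinj : Function.Injective t := fun a b hab => by_contra fun h => hUd t ht a b h hab
  have hdiff : ∀ k, DifferentiableAt ℂ (A k) t := fun k =>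
    (hA k).differentiableAt (hUo.mem_nhds ht)
  have hderiv : ∀ a b, a ≠ b → fderiv ℂ (schlesingerHamiltonian A a) t (Pi.single b 1)
      = trace (A a t * A b t) / (t a - t b) ^ 2 := fun a b hab =>
    fderiv_schlesingerHamiltonian_apply_single hinj hdiff hab
      (fun k hk => (hSch k b t ht).1 hk) (hSch b b t ht).2
  rw [hderiv i j hij, hderiv j i hij.symm, trace_mul_comm, ← neg_sub, neg_sq]

/-- **Closedness of the 1-form `Σ H_i dt_i` along the Schlesinger flows.**
If holomorphic `A₁,…,A_N : U → Mₙ(ℂ)` satisfy the Schlesinger equation on a connected open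
set `U ⊆ ℂ^N` whose points have pairwise distinct coordinates, then the Hamiltonians
`H_i(t) = Σ_{k≠i} Tr(A_i(t)A_k(t))/(t_i−t_k)` satisfy `∂H_i/∂t_j = ∂H_j/∂t_i` on `U`,
i.e. the 1-form `Σ_i H_i dt_i` is closed (so `d log τ = Σ_i H_i dt_i` is locally solvable). -/
theorem schlesinger_one_form_closed
    (r N : ℕ) (hr : 1 ≤ r) (hN : 2 ≤ N)
    (U : Set (Fin N → ℂ)) (hUo : IsOpen U) (hUc : IsConnected U)
    (hUd : ∀ t ∈ U, ∀ i j : Fin N, i ≠ j → t i ≠ t j)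
    (A : Fin N → (Fin N → ℂ) → Matrix (Fin r) (Fin r) ℂ)
    (hA : ∀ i, DifferentiableOn ℂ (A i) U)
    (hSch : ∀ i j : Fin N, ∀ t ∈ U,
        (i ≠ j → fderiv ℂ (A i) t (Pi.single j 1)
            = (t i - t j)⁻¹ • ⁅A i t, A j t⁆) ∧
        fderiv ℂ (A i) t (Pi.single i 1)
            = -∑ k ∈ Finset.univ.erase i, (t i - t k)⁻¹ • ⁅A i t, A k t⁆)
    (H : Fin N → (Fin N → ℂ) → ℂ)
    (hH : ∀ i : Fin N, ∀ t : Fin N → ℂ,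
        H i t = ∑ k ∈ Finset.univ.erase i, Matrix.trace (A i t * A k t) / (t i - t k)) :
    ∀ i j : Fin N, ∀ t ∈ U,
      fderiv ℂ (H i) t (Pi.single j 1) = fderiv ℂ (H j) t (Pi.single i 1) :=
  schlesinger_one_form_closed_general r N U hUo hUd A hA hSch H hH
end

section
/- Let Θ, A, B, Y₀, Y₁ be r×r complex matrices with Y₀ invertible, satisfying A·Y₀ = Y₀·Θ and Y₁ + Y₁·Θ = A·Y₁ + B·Y₀. Then Tr(Θ · Y₀^{-1} · Y₁) = Tr(A · B). -/
open Matrix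

/-- **Trace identity underlying the two definitions of the Schlesinger tau function.**
If `Θ, A, B, Y₀, Y₁` are `r×r` complex matrices with `Y₀` invertible, `A·Y₀ = Y₀·Θ` and
`Y₁ + Y₁·Θ = A·Y₁ + B·Y₀`, then `Tr(Θ·Y₀⁻¹·Y₁) = Tr(A·B)`. -/
theorem trace_theta_eq_trace_AB
    (r : ℕ) (Θ A B Y₀ Y₁ : Matrix (Fin r) (Fin r) ℂ)
    (hY₀ : IsUnit Y₀)
    (h1 : A * Y₀ = Y₀ * Θ)
    (h2 : Y₁ + Y₁ * Θ = A * Y₁ + B * Y₀) :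
    Matrix.trace (Θ * Y₀⁻¹ * Y₁) = Matrix.trace (A * B) := by
  have hdet : IsUnit Y₀.det := (Matrix.isUnit_iff_isUnit_det _).mp hY₀
  have hYi : Y₀ * Y₀⁻¹ = 1 := Matrix.mul_nonsing_inv _ hdet
  have hiY : Y₀⁻¹ * Y₀ = 1 := Matrix.nonsing_inv_mul _ hdet
  have hcomm : Θ * Y₀⁻¹ = Y₀⁻¹ * A := by
    calc Θ * Y₀⁻¹ = Y₀⁻¹ * (Y₀ * Θ) * Y₀⁻¹ := by
          rw [← mul_assoc, hiY, one_mul]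
      _ = Y₀⁻¹ * A := by rw [← h1, mul_assoc, mul_assoc, hYi, mul_one]
  have h3 : B * Y₀ = Y₁ + Y₁ * Θ - A * Y₁ := eq_sub_of_add_eq' h2.symm
  have hB : B = (Y₁ + Y₁ * Θ - A * Y₁) * Y₀⁻¹ := by
    calc B = B * Y₀ * Y₀⁻¹ := by rw [mul_assoc, hYi, mul_one]
      _ = (Y₁ + Y₁ * Θ - A * Y₁) * Y₀⁻¹ := by rw [h3]
  have key : Y₁ * Θ * Y₀⁻¹ = Y₁ * Y₀⁻¹ * A := by
    rw [mul_assoc, hcomm, ← mul_assoc]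
  have hmid : Matrix.trace (A * (Y₁ * Θ * Y₀⁻¹)) = Matrix.trace (A * (A * Y₁ * Y₀⁻¹)) := by
    rw [key, Matrix.trace_mul_comm, mul_assoc, Matrix.trace_mul_comm (Y₁ * Y₀⁻¹) (A * A)]
    rw [show A * A * (Y₁ * Y₀⁻¹) = A * (A * Y₁ * Y₀⁻¹) by noncomm_ring]
  have hexp : Matrix.trace (A * B)
      = Matrix.trace (A * (Y₁ * Y₀⁻¹)) + Matrix.trace (A * (Y₁ * Θ * Y₀⁻¹))
        - Matrix.trace (A * (A * Y₁ * Y₀⁻¹)) := by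
    rw [hB]
    rw [show A * ((Y₁ + Y₁ * Θ - A * Y₁) * Y₀⁻¹)
        = A * (Y₁ * Y₀⁻¹) + A * (Y₁ * Θ * Y₀⁻¹) - A * (A * Y₁ * Y₀⁻¹) by noncomm_ring]
    rw [Matrix.trace_sub, Matrix.trace_add]
  rw [hexp, hmid]
  rw [hcomm, mul_assoc, Matrix.trace_mul_comm, ← mul_assoc]
  ring
end

section
/- Let r ≥ 2, N ≥ 2, let c_1,…,c_N be pairwise distinct complex numbers, and set f(λ) = Π_{i=1}^N (λ − c_i). Let A_1,…,A_N and A⁰_1,…,A⁰_N be r×r complex matrices such that for each i the matrix A_i is similar to A⁰_i (i.e. A_i = g_i A⁰_i g_i^{-1} for some invertible g_i). Define the matrix-valued polynomials L(λ) = Σ_{i=1}^N A_i · Π_{j≠i}(λ − c_j) and L⁰(λ) = Σ_{i=1}^N A⁰_i · Π_{j≠i}(λ − c_j). Then there exist polynomials p_2(λ),…,p_r(λ) ∈ ℂ[λ] with deg p_ℓ ≤ (N−1)ℓ − N such that, as polynomials in the two variables λ and μ̃, det(L(λ) − μ̃ I) = det(L⁰(λ) − μ̃ I) + f(λ) ·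 Σ_{ℓ=2}^r p_ℓ(λ) μ̃^{r−ℓ}. -/
/-!
Regard `L` and `L⁰` as matrices over `ℂ[λ]` and let `q(λ, μ)` be the difference of their
characteristic polynomials. Similar matrices have equal traces, so `L` and `L⁰` have the same
trace and `q` has `μ`-degree at most `r - 2`. At a node `c_m` only the `m`-th summand of `L`
survives, so `L(c_m)` and `L⁰(c_m)` are similar; hence every `μ`-coefficient of `q` vanishes at
all nodes and is divisible by `f`. Finally, the `μ^k`-coefficient of the characteristic
polynomial of a matrix whose entries have degree at most `N - 1` has degree at most
`(N - 1)(r - k)`, and dividing by `f` costs exactly `N` degrees.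
-/

open Matrix Finset Polynomial Lagrange

namespace Polynomial

variable {R : Type*} [CommRing R]

theorem eval_eq_sum_range_of_degree_lt {p : R[X]} {n : ℕ} (hp : p.degree < n) (x : R) :
    p.eval x = ∑ k ∈ range n, p.coeff k * x ^ k := by
  rcases eq_or_ne p 0 with rfl | h0
  · simp
  · exact eval_eq_sum_range' ((natDegree_lt_iff_degree_lt h0).mpr hp) x

theorem evalEval_eq_sum_range_of_degree_lt {p : R[X][X]} {n : ℕ} (hp : p.degree < n) (x y : R) :
    p.evalEval x y = ∑ k ∈ range n, (p.coeff k).eval x * y ^ k := by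
  rw [← map_evalRingHom_eval,
    eval_eq_sum_range_of_degree_lt (degree_map_le.trans_lt hp)]
  simp only [coeff_map, coe_evalRingHom]

theorem natDegree_le_sub_of_natDegree_mul_le [IsDomain R] {f g : R[X]} {m : ℕ} (hf : f ≠ 0)
    (h : (f * g).natDegree ≤ m) : g.natDegree ≤ m - f.natDegree := by
  rcases eq_or_ne g 0 with rfl | hg
  · simp
  · rw [natDegree_mul hf hg] at h
    omega

def bidegreeLE (D d : ℕ) : AddSubgroup R[X][X] where
  carrier := {p | p.natDegree ≤ d ∧ ∀ k, (p.coeff k).natDegree ≤ D * (d - k)}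
  add_mem' := fun ⟨hp, hp'⟩ ⟨hq, hq'⟩ => ⟨natDegree_add_le_of_degree_le hp hq,
    fun k => by rw [coeff_add]; exact natDegree_add_le_of_degree_le (hp' k) (hq' k)⟩
  zero_mem' := ⟨by simp, by simp⟩
  neg_mem' := fun ⟨hp, hp'⟩ => ⟨by rwa [natDegree_neg],
    fun k => by rw [coeff_neg, natDegree_neg]; exact hp' k⟩

variable {D d e : ℕ} {p q : R[X][X]}

theorem mem_bidegreeLE :
    p ∈ bidegreeLE D d ↔ p.natDegree ≤ d ∧ ∀ k, (p.coeff k).natDegree ≤ D * (d - k) :=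
  Iff.rfl

theorem mul_mem_bidegreeLE (hp : p ∈ bidegreeLE D d) (hq : q ∈ bidegreeLE D e) :
    p * q ∈ bidegreeLE D (d + e) := by
  obtain ⟨hpd, hpc⟩ := hp
  obtain ⟨hqd, hqc⟩ := hq
  refine ⟨natDegree_mul_le_of_le hpd hqd, fun k => ?_⟩
  rw [coeff_mul]
  refine natDegree_sum_le_of_forall_le _ _ fun x hx => ?_
  rw [HasAntidiagonal.mem_antidiagonal] at hx
  rcases lt_or_ge d x.1 with h | h
  · simp [coeff_eq_zero_of_natDegree_lt (hpd.trans_lt h)]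
  rcases lt_or_ge e x.2 with h' | h'
  · simp [coeff_eq_zero_of_natDegree_lt (hqd.trans_lt h')]
  calc _ ≤ D * (d - x.1) + D * (e - x.2) := natDegree_mul_le_of_le (hpc _) (hqc _)
    _ = D * (d + e - k) := by rw [← mul_add]; congr 1; omega

instance : SetLike.GradedMonoid (bidegreeLE (R := R) D) where
  one_mem := ⟨by simp, fun k => by rcases k with _ | k <;> simp [coeff_one]⟩
  mul_mem := fun _ _ _ _ => mul_mem_bidegreeLE

theorem C_mem_bidegreeLE_one {a : R[X]} (ha : a.natDegree ≤ D) : C a ∈ bidegreeLE D 1 :=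
  ⟨by simp, fun k => by rcases k with _ | k <;> simp [coeff_C, ha]⟩

theorem X_mem_bidegreeLE_one : (X : R[X][X]) ∈ bidegreeLE D 1 :=
  ⟨natDegree_X_le, fun k => by rcases k with _ | _ | k <;> simp [coeff_X]⟩

end Polynomial

namespace Matrix

variable {n R : Type*} [Fintype n] [DecidableEq n] [CommRing R]

theorem charpoly_mem_bidegreeLE {D : ℕ} {M : Matrix n n R[X]}
    (hM : ∀ i j, (M i j).natDegree ≤ D) : M.charpoly ∈ bidegreeLE D (Fintype.card n) := by
  have hentry (i j : n) : charmatrix M i j ∈ bidegreeLE D 1 := by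
    rw [charmatrix_apply]
    by_cases hij : i = j
    · subst hij
      exact sub_mem (by simpa using X_mem_bidegreeLE_one) (C_mem_bidegreeLE_one (hM i i))
    · rw [diagonal_apply_ne _ hij, zero_sub]
      exact neg_mem (C_mem_bidegreeLE_one (hM i j))
  rw [charpoly, det_apply]
  refine sum_mem fun σ _ => ?_
  rw [Units.smul_def]
  refine zsmul_mem ?_ _
  simpa using SetLike.prod_mem_graded (bidegreeLE D) (fun _ => 1)
    (fun i => charmatrix M (σ i) i) (F := univ) fun i _ => hentry (σ i) i

theorem det_sub_smul_one (M : Matrix n n R) (t : R) :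
    (M - t • (1 : Matrix n n R)).det = (-1) ^ Fintype.card n * M.charpoly.eval t := by
  rw [eval_charpoly, ← det_neg, neg_sub, scalar_apply, smul_one_eq_diagonal]

theorem degree_charpoly_sub_lt_of_trace_eq [Nontrivial R] {M M' : Matrix n n R}
    (h : M.trace = M'.trace) :
    (M.charpoly - M'.charpoly).degree < ↑(Fintype.card n - 1) := by
  rw [degree_lt_iff_coeff_zero]
  intro k hk
  rw [coeff_sub, sub_eq_zero]
  rcases Nat.lt_or_ge k (Fintype.card n) with hlt | hge
  · have : Nonempty n := Fintype.card_pos_iff.mp (by omega)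
    obtain rfl : k = Fintype.card n - 1 := by omega
    simpa [trace_eq_neg_charpoly_coeff] using h
  · rcases hge.eq_or_lt with rfl | hgt
    · rw [← charpoly_natDegree_eq_dim M, (charpoly_monic M).coeff_natDegree,
        charpoly_natDegree_eq_dim M, ← charpoly_natDegree_eq_dim M',
        (charpoly_monic M').coeff_natDegree]
    · rw [coeff_eq_zero_of_natDegree_lt (by simpa using hgt),
        coeff_eq_zero_of_natDegree_lt (by simpa using hgt)]

end Matrix

theorem Finset.sum_Icc_two_sub_eq_sum_range {M : Type*} [AddCommMonoid M] (g : ℕ → M)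
    (r : ℕ) :
    ∑ ℓ ∈ Icc 2 r, g (r - ℓ) = ∑ k ∈ range (r - 1), g k := by
  rw [← Ico_add_one_right_eq_Icc, sum_Ico_reflect _ _ le_rfl, Nat.sub_self,
    Nat.Ico_zero_eq_range]
  rfl

theorem Lagrange.nodal_dvd_of_eval_eq_zero {ι K : Type*} [Fintype ι] [Field K] {c : ι → K}
    (hc : Function.Injective c) {p : K[X]} (h : ∀ i, p.eval (c i) = 0) : nodal univ c ∣ p :=
  Fintype.prod_dvd_of_coprime (pairwise_coprime_X_sub_C hc) fun i => dvd_iff_isRoot.mpr (h i)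

section LaxMatrix

variable {ι n R : Type*} [Fintype ι] [DecidableEq ι] [CommRing R]

/-- The paper's `L(λ) = f(λ) M(λ) = Σ_i A_i Π_{j ≠ i} (λ - c_j)`. -/
noncomputable def laxMatrix (c : ι → R) (A : ι → Matrix n n R) : Matrix n n R[X] :=
  ∑ i, nodal (univ.erase i) c • (A i).map C

variable (c : ι → R) (A B : ι → Matrix n n R)

theorem laxMatrix_map_eval (z : R) :
    (laxMatrix c A).map (evalRingHom z) = ∑ i, (∏ j ∈ univ.erase i, (z - c j)) • A i := by
  ext k l
  simp [laxMatrix, Matrix.sum_apply, eval_finsetSum, eval_nodal]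

theorem laxMatrix_map_eval_node (m : ι) :
    (laxMatrix c A).map (evalRingHom (c m)) = (∏ j ∈ univ.erase m, (c m - c j)) • A m := by
  rw [laxMatrix_map_eval]
  refine sum_eq_single m (fun i _ him => ?_) (by simp)
  rw [prod_eq_zero (mem_erase.2 ⟨Ne.symm him, mem_univ m⟩) (sub_self _), zero_smul]

theorem det_laxMatrix_eval_sub_smul_one [Fintype n] [DecidableEq n] (z μ : R) :
    (∑ i, (∏ j ∈ univ.erase i, (z - c j)) • A i - μ • (1 : Matrix n n R)).det
      = (-1) ^ Fintype.card n * (laxMatrix c A).charpoly.evalEval z μ := by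
  rw [← laxMatrix_map_eval, det_sub_smul_one, charpoly_map, map_evalRingHom_eval]

theorem natDegree_laxMatrix_apply_le [Nontrivial R] (k l : n) :
    (laxMatrix c A k l).natDegree ≤ Fintype.card ι - 1 := by
  rw [laxMatrix, Matrix.sum_apply]
  refine natDegree_sum_le_of_forall_le _ _ fun i _ => ?_
  rw [Matrix.smul_apply, map_apply, smul_eq_mul]
  refine (natDegree_mul_C_le _ _).trans ?_
  rw [natDegree_nodal, card_erase_of_mem (mem_univ i), card_univ]

theorem trace_laxMatrix_eq_of_trace_eq [Fintype n] (h : ∀ i, (A i).trace = (B i).trace) :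
    (laxMatrix c A).trace = (laxMatrix c B).trace := by
  simp only [laxMatrix, trace_sum, trace_smul, ← AddMonoidHom.map_trace C, h]

theorem map_charpoly_laxMatrix_node_eq_of_conj [Fintype n] [DecidableEq n]
    (hsim : ∀ i, ∃ g : (Matrix n n R)ˣ,
      A i = (g : Matrix n n R) * B i * (↑g⁻¹ : Matrix n n R)) (m : ι) :
    (laxMatrix c A).charpoly.map (evalRingHom (c m))
      = (laxMatrix c B).charpoly.map (evalRingHom (c m)) := by
  obtain ⟨g, hg⟩ := hsim m
  rw [← charpoly_map, ← charpoly_map, laxMatrix_map_eval_node, laxMatrix_map_eval_node, hg,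
    ← Matrix.smul_mul, ← Matrix.mul_smul, coe_units_inv, charpoly_units_conj]

end LaxMatrix

theorem C_nodal_dvd_charpoly_laxMatrix_sub {ι n K : Type*} [Fintype ι] [DecidableEq ι]
    [Fintype n] [DecidableEq n] [Field K] (c : ι → K) (A B : ι → Matrix n n K)
    (hc : Function.Injective c)
    (hsim : ∀ i, ∃ g : (Matrix n n K)ˣ,
      A i = (g : Matrix n n K) * B i * (↑g⁻¹ : Matrix n n K)) :
    C (nodal univ c) ∣ (laxMatrix c A).charpoly - (laxMatrix c B).charpoly := by
  refine (C_dvd_iff_dvd_coeff _ _).mpr fun k => nodal_dvd_of_eval_eq_zero hc fun m => ?_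
  rw [← coe_evalRingHom, ← coeff_map, Polynomial.map_sub,
    map_charpoly_laxMatrix_node_eq_of_conj c A B hsim m, sub_self, coeff_zero]

theorem spectral_curve_characteristic_structure_general
    (r N : ℕ)
    (c : Fin N → ℂ) (hc : ∀ i j : Fin N, i ≠ j → c i ≠ c j)
    (A A0 : Fin N → Matrix (Fin r) (Fin r) ℂ)
    (hsim : ∀ i : Fin N, ∃ g : (Matrix (Fin r) (Fin r) ℂ)ˣ,
        A i = (g : Matrix (Fin r) (Fin r) ℂ) * A0 i * (↑g⁻¹ : Matrix (Fin r) (Fin r) ℂ)) :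
    ∃ p : ℕ → Polynomial ℂ,
      (∀ ℓ ∈ Finset.Icc 2 r, (p ℓ).natDegree ≤ (N - 1) * ℓ - N) ∧
      ∀ z μ : ℂ,
        (∑ i, (∏ j ∈ Finset.univ.erase i, (z - c j)) • A i
            - μ • (1 : Matrix (Fin r) (Fin r) ℂ)).det
          = (∑ i, (∏ j ∈ Finset.univ.erase i, (z - c j)) • A0 i
              - μ • (1 : Matrix (Fin r) (Fin r) ℂ)).det
            + (∏ i, (z - c i)) * ∑ ℓ ∈ Finset.Icc 2 r, (p ℓ).eval z * μ ^ (r - ℓ) := by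
  have hinj : Function.Injective c := fun i j h => by_contra fun hij => hc i j hij h
  have hf : nodal univ c ≠ 0 := nodal_ne_zero
  obtain ⟨s, hs⟩ := C_nodal_dvd_charpoly_laxMatrix_sub c A A0 hinj hsim
  have hs_mem : C (nodal univ c) * s ∈ bidegreeLE (N - 1) r := by
    simpa [← hs] using sub_mem (charpoly_mem_bidegreeLE (natDegree_laxMatrix_apply_le c A))
      (charpoly_mem_bidegreeLE (natDegree_laxMatrix_apply_le c A0))
  have htrace : (laxMatrix c A).trace = (laxMatrix c A0).trace :=
    trace_laxMatrix_eq_of_trace_eq c A A0 fun i => by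
      obtain ⟨g, hg⟩ := hsim i
      rw [hg, trace_units_conj]
  have hs_deg : s.degree < ↑(r - 1) := by
    rw [← degree_C_mul hf, ← hs]
    simpa using degree_charpoly_sub_lt_of_trace_eq htrace
  refine ⟨fun ℓ => (-1) ^ r • s.coeff (r - ℓ), fun ℓ hℓ => ?_, fun z μ => ?_⟩
  · have hℓ : r - (r - ℓ) = ℓ := by have := mem_Icc.mp hℓ; omega
    have hcoeff := (mem_bidegreeLE.mp hs_mem).2 (r - ℓ)
    rw [coeff_C_mul, hℓ] at hcoeff
    have := natDegree_le_sub_of_natDegree_mul_le hf hcoeff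
    rw [natDegree_nodal, card_univ, Fintype.card_fin] at this
    exact (natDegree_smul_le _ _).trans this
  · rw [det_laxMatrix_eval_sub_smul_one, det_laxMatrix_eval_sub_smul_one, ← sub_eq_iff_eq_add',
      ← mul_sub, ← evalEval_sub, hs, evalEval_mul, evalEval_C, eval_nodal,
      evalEval_eq_sum_range_of_degree_lt hs_deg,
      ← sum_Icc_two_sub_eq_sum_range fun k => (s.coeff k).eval z * μ ^ k, Fintype.card_fin]
    simp only [Finset.mul_sum, eval_smul]
    exact Finset.sum_congr rfl fun ℓ _ => by ring

/-- **Structure of the characteristic polynomial of the spectral curve.**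
Let `c₁,…,c_N` be pairwise distinct, `f(λ) = Π_i (λ−c_i)`, and let `A_i` be similar to
`A⁰_i` for each `i`. With `L(λ) = Σ_i A_i·Π_{j≠i}(λ−c_j)` and
`L⁰(λ) = Σ_i A⁰_i·Π_{j≠i}(λ−c_j)`, there are polynomials `p_ℓ` (`ℓ = 2,…,r`) of degree at
most `(N−1)ℓ − N` with
`det(L(λ) − μ̃I) = det(L⁰(λ) − μ̃I) + f(λ)·Σ_{ℓ=2}^r p_ℓ(λ) μ̃^{r−ℓ}` for all `λ, μ̃`. -/
theorem spectral_curve_characteristic_structure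
    (r N : ℕ) (hr : 2 ≤ r) (hN : 2 ≤ N)
    (c : Fin N → ℂ) (hc : ∀ i j : Fin N, i ≠ j → c i ≠ c j)
    (A A0 : Fin N → Matrix (Fin r) (Fin r) ℂ)
    (hsim : ∀ i : Fin N, ∃ g : (Matrix (Fin r) (Fin r) ℂ)ˣ,
        A i = (g : Matrix (Fin r) (Fin r) ℂ) * A0 i * (↑g⁻¹ : Matrix (Fin r) (Fin r) ℂ)) :
    ∃ p : ℕ → Polynomial ℂ,
      (∀ ℓ ∈ Finset.Icc 2 r, (p ℓ).natDegree ≤ (N - 1) * ℓ - N) ∧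
      ∀ z μ : ℂ,
        (∑ i, (∏ j ∈ Finset.univ.erase i, (z - c j)) • A i
            - μ • (1 : Matrix (Fin r) (Fin r) ℂ)).det
          = (∑ i, (∏ j ∈ Finset.univ.erase i, (z - c j)) • A0 i
              - μ • (1 : Matrix (Fin r) (Fin r) ℂ)).det
            + (∏ i, (z - c i)) * ∑ ℓ ∈ Finset.Icc 2 r, (p ℓ).eval z * μ ^ (r - ℓ) :=
  spectral_curve_characteristic_structure_general r N c hc A A0 hsim
end
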